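/- Let n ≥ 2 be an integer, a ∈ (0,1], and λ ≥ n!. Define m(z) = e^{−1/z} z^{−(n+2)} − λ e^{−z}. Then for every b > 0, the polynomial P(b) = ∫_a^∞ z(z+b)^{n−1} m(z) dz satisfies P(b) < 0. -/

import Mathlib

/-!
Write the integral as `I₁ - λ I₂`. Substituting `u = 1/z` and enlarging the domain to `z > 0`,
`I₁ ≤ ∫₀^∞ (1 + b u)^(n-1) e^(-u) du = ∑ₖ C(n-1,k) bᵏ k! ≤ (n-1)! (1 + b)^(n-1)`.
On `z > 1 ≥ a` we have `z (z + b)^(n-1) ≥ (1 + b)^(n-1) z`, so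
`I₂ ≥ (1 + b)^(n-1) ∫₁^∞ z e^(-z) dz = 2 (1 + b)^(n-1) / e`.
Finally `e < 2n` for `n ≥ 2`, hence `(n-1)! < 2 n! / e ≤ 2 λ / e`.
-/

open MeasureTheory Set Real Finset Polynomial
open scoped Nat

lemma integrableOn_pow_mul_exp_neg_Ioi (k : ℕ) :
    IntegrableOn (fun x : ℝ => x ^ k * exp (-x)) (Ioi 0) := by
  refine (GammaIntegral_convergent (s := k + 1) (by positivity)).congr_fun (fun x _ => ?_)
    measurableSet_Ioi
  dsimp only
  rw [add_sub_cancel_right, rpow_natCast, mul_comm]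

lemma integral_pow_mul_exp_neg_Ioi (k : ℕ) : ∫ x in Ioi (0 : ℝ), x ^ k * exp (-x) = k ! := by
  rw [← Gamma_nat_eq_factorial, Gamma_eq_integral (by positivity)]
  refine setIntegral_congr_fun measurableSet_Ioi (fun x _ => ?_)
  rw [add_sub_cancel_right, rpow_natCast, mul_comm]

lemma integrableOn_sum_mul_pow_mul_exp_neg_Ioi (s : Finset ℕ) (c : ℕ → ℝ) :
    IntegrableOn (fun x : ℝ => (∑ k ∈ s, c k * x ^ k) * exp (-x)) (Ioi 0) := by
  simp_rw [sum_mul, mul_assoc]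
  exact integrable_finsetSum _ fun k _ => (integrableOn_pow_mul_exp_neg_Ioi k).const_mul (c k)

lemma integral_sum_mul_pow_mul_exp_neg_Ioi (s : Finset ℕ) (c : ℕ → ℝ) :
    ∫ x in Ioi (0 : ℝ), (∑ k ∈ s, c k * x ^ k) * exp (-x) = ∑ k ∈ s, c k * k ! := by
  simp_rw [sum_mul, mul_assoc]
  rw [integral_finsetSum _ fun k _ => (integrableOn_pow_mul_exp_neg_Ioi k).const_mul (c k)]
  simp_rw [integral_const_mul, integral_pow_mul_exp_neg_Ioi]

lemma integrableOn_eval_mul_exp_neg_Ioi (p : ℝ[X]) :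
    IntegrableOn (fun x : ℝ => p.eval x * exp (-x)) (Ioi 0) := by
  simpa only [eval_eq_sum_range] using integrableOn_sum_mul_pow_mul_exp_neg_Ioi _ p.coeff

lemma one_add_mul_pow_eq_sum (b u : ℝ) (N : ℕ) :
    (1 + b * u) ^ N = ∑ k ∈ range (N + 1), (N.choose k * b ^ k) * u ^ k := by
  rw [add_comm, add_pow]
  exact sum_congr rfl fun k _ => by ring

lemma integral_one_add_mul_pow_mul_exp_neg_le {b : ℝ} (hb : 0 ≤ b) (N : ℕ) :
    ∫ u in Ioi (0 : ℝ), (1 + b * u) ^ N * exp (-u) ≤ N ! * (1 + b) ^ N := by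
  have h1b : (1 + b) ^ N = ∑ k ∈ range (N + 1), (N.choose k * b ^ k) * 1 ^ k := by
    simpa using one_add_mul_pow_eq_sum b 1 N
  simp_rw [one_add_mul_pow_eq_sum, h1b, integral_sum_mul_pow_mul_exp_neg_Ioi, mul_sum, one_pow,
    mul_one]
  refine sum_le_sum fun k hk => ?_
  rw [mul_comm]
  gcongr
  exact mem_range_succ_iff.mp hk

lemma integrableOn_mul_exp_neg_Ioi {c : ℝ} (hc : 0 ≤ c) :
    IntegrableOn (fun x : ℝ => x * exp (-x)) (Ioi c) := by
  simpa only [pow_one] using (integrableOn_pow_mul_exp_neg_Ioi 1).mono_set (Ioi_subset_Ioi hc)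

lemma integral_Ioi_one_mul_exp_neg : ∫ x in Ioi (1 : ℝ), x * exp (-x) = 2 * exp (-1) := by
  have hderiv (x : ℝ) : HasDerivAt (fun x => -((x + 1) * exp (-x))) (x * exp (-x)) x := by
    refine (((hasDerivAt_id x).add_const 1).mul (hasDerivAt_neg x).exp).neg.congr_deriv ?_
    simp only [id]
    ring
  have hlim : Filter.Tendsto (fun x : ℝ => -((x + 1) * exp (-x))) Filter.atTop (nhds 0) := by
    have h := (tendsto_pow_mul_exp_neg_atTop_nhds_zero 1).add tendsto_exp_neg_atTop_nhds_zero
    simpa [add_mul] using h.neg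
  rw [integral_Ioi_of_hasDerivAt_of_tendsto' (fun x _ => hderiv x)
    (integrableOn_mul_exp_neg_Ioi zero_le_one) hlim]
  norm_num

lemma smul_comp_rpow_neg_one_eq (g : ℝ → ℝ) (z : ℝ) :
    (|(-1 : ℝ)| * z ^ ((-1 : ℝ) - 1)) • g (z ^ (-1 : ℝ)) = g z⁻¹ / z ^ 2 := by
  rw [smul_eq_mul, rpow_neg_one, show (-1 : ℝ) - 1 = ((-2 : ℤ) : ℝ) by norm_num, rpow_intCast]
  simp [div_eq_inv_mul]

lemma integral_comp_inv_div_sq_Ioi (g : ℝ → ℝ) :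
    ∫ z in Ioi (0 : ℝ), g z⁻¹ / z ^ 2 = ∫ u in Ioi 0, g u := by
  rw [← integral_comp_rpow_Ioi g (p := -1) (by norm_num)]
  exact setIntegral_congr_fun measurableSet_Ioi fun z _ => (smul_comp_rpow_neg_one_eq g z).symm

lemma integrableOn_comp_inv_div_sq_Ioi_iff (g : ℝ → ℝ) :
    IntegrableOn (fun z => g z⁻¹ / z ^ 2) (Ioi 0) ↔ IntegrableOn g (Ioi 0) := by
  rw [← integrableOn_Ioi_comp_rpow_iff g (p := -1) (by norm_num)]
  exact integrableOn_congr_fun (fun z _ => (smul_comp_rpow_neg_one_eq g z).symm) measurableSet_Ioi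

lemma integrableOn_one_add_mul_pow_mul_exp_neg_Ioi (b : ℝ) (N : ℕ) :
    IntegrableOn (fun u : ℝ => (1 + b * u) ^ N * exp (-u)) (Ioi 0) := by
  simp_rw [one_add_mul_pow_eq_sum]
  exact integrableOn_sum_mul_pow_mul_exp_neg_Ioi _ _

lemma integrableOn_mul_add_pow_mul_exp_neg_Ioi {a : ℝ} (ha : 0 ≤ a) (b : ℝ) (N : ℕ) :
    IntegrableOn (fun z : ℝ => z * (z + b) ^ N * exp (-z)) (Ioi a) := by
  have h := (integrableOn_eval_mul_exp_neg_Ioi (X * (X + C b) ^ N)).mono_set (Ioi_subset_Ioi ha)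
  simpa only [eval_mul, eval_pow, eval_add, eval_X, eval_C] using h

lemma le_integral_Ioi_mul_add_pow_mul_exp_neg {a b : ℝ} (ha : 0 ≤ a) (ha1 : a ≤ 1) (hb : 0 ≤ b)
    (N : ℕ) : (1 + b) ^ N * (2 * exp (-1)) ≤ ∫ z in Ioi a, z * (z + b) ^ N * exp (-z) := by
  have hint := integrableOn_mul_add_pow_mul_exp_neg_Ioi ha b N
  calc (1 + b) ^ N * (2 * exp (-1)) = ∫ z in Ioi 1, (1 + b) ^ N * (z * exp (-z)) := by
        rw [integral_const_mul, integral_Ioi_one_mul_exp_neg]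
    _ ≤ ∫ z in Ioi 1, z * (z + b) ^ N * exp (-z) := by
        refine setIntegral_mono_on ?_ (hint.mono_set (Ioi_subset_Ioi ha1)) measurableSet_Ioi
          fun z (hz : 1 < z) => ?_
        · exact (integrableOn_mul_exp_neg_Ioi zero_le_one).const_mul _
        · have : (1 + b) ^ N ≤ (z + b) ^ N := by gcongr
          nlinarith [mul_pos (zero_lt_one.trans hz) (exp_pos (-z))]
    _ ≤ ∫ z in Ioi a, z * (z + b) ^ N * exp (-z) := by
        refine setIntegral_mono_set hint ?_ (Ioi_subset_Ioi ha1).eventuallyLE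
        filter_upwards [ae_restrict_mem measurableSet_Ioi] with z (hz : a < z)
        have : 0 < z := ha.trans_lt hz
        positivity

lemma mul_add_pow_mul_exp_neg_inv_zpow_eq {n : ℕ} (hn : 1 ≤ n) (b : ℝ) {z : ℝ} (hz : z ≠ 0) :
    z * (z + b) ^ (n - 1) * (exp (-1 / z) * z ^ (-(n + 2 : ℤ))) =
      (1 + b * z⁻¹) ^ (n - 1) * exp (-z⁻¹) / z ^ 2 := by
  obtain ⟨N, rfl⟩ : ∃ N, n = N + 1 := ⟨n - 1, by omega⟩
  rw [Nat.add_sub_cancel, show -((N + 1 : ℕ) + 2 : ℤ) = -((N + 3 : ℕ) : ℤ) by push_cast; ring,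
    zpow_neg, zpow_natCast, neg_div, one_div, show 1 + b * z⁻¹ = (z + b) / z by field_simp,
    div_pow]
  field_simp
  ring

lemma integrableOn_mul_add_pow_mul_exp_neg_inv_zpow_Ioi {n : ℕ} (hn : 1 ≤ n) {a : ℝ} (ha : 0 ≤ a)
    (b : ℝ) : IntegrableOn (fun z => z * (z + b) ^ (n - 1) * (exp (-1 / z) * z ^ (-(n + 2 : ℤ))))
      (Ioi a) := by
  refine (((integrableOn_comp_inv_div_sq_Ioi_iff _).2
    (integrableOn_one_add_mul_pow_mul_exp_neg_Ioi b (n - 1))).congr_fun (fun z (hz : 0 < z) => ?_)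
      measurableSet_Ioi).mono_set (Ioi_subset_Ioi ha)
  exact (mul_add_pow_mul_exp_neg_inv_zpow_eq hn b hz.ne').symm

lemma integral_Ioi_mul_add_pow_mul_exp_neg_inv_zpow_le {n : ℕ} (hn : 1 ≤ n) {a b : ℝ} (ha : 0 ≤ a)
    (hb : 0 ≤ b) :
    ∫ z in Ioi a, z * (z + b) ^ (n - 1) * (exp (-1 / z) * z ^ (-(n + 2 : ℤ))) ≤
      (n - 1)! * (1 + b) ^ (n - 1) :=
  calc _ ≤ ∫ z in Ioi 0, z * (z + b) ^ (n - 1) * (exp (-1 / z) * z ^ (-(n + 2 : ℤ))) := by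
        refine setIntegral_mono_set (integrableOn_mul_add_pow_mul_exp_neg_inv_zpow_Ioi hn le_rfl b)
          ?_ (Ioi_subset_Ioi ha).eventuallyLE
        filter_upwards [ae_restrict_mem measurableSet_Ioi] with z (hz : 0 < z)
        positivity
    _ = ∫ z in Ioi 0, (1 + b * z⁻¹) ^ (n - 1) * exp (-z⁻¹) / z ^ 2 :=
        setIntegral_congr_fun measurableSet_Ioi fun z (hz : 0 < z) =>
          mul_add_pow_mul_exp_neg_inv_zpow_eq hn b hz.ne'
    _ = ∫ u in Ioi 0, (1 + b * u) ^ (n - 1) * exp (-u) :=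
        integral_comp_inv_div_sq_Ioi fun u => (1 + b * u) ^ (n - 1) * exp (-u)
    _ ≤ _ := integral_one_add_mul_pow_mul_exp_neg_le hb (n - 1)

lemma factorial_pred_lt_factorial_mul_two_mul_exp_neg_one {n : ℕ} (hn : 2 ≤ n) :
    ((n - 1)! : ℝ) < n ! * (2 * exp (-1)) := by
  obtain ⟨m, rfl⟩ : ∃ m, n = m + 1 := ⟨n - 1, by omega⟩
  have key : 1 < ((m + 1 : ℕ) : ℝ) * (2 * exp (-1)) := by
    rw [exp_neg, ← mul_assoc, ← div_eq_mul_inv, one_lt_div (exp_pos 1)]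
    push_cast
    have : (1 : ℝ) ≤ m := by exact_mod_cast (by omega : 1 ≤ m)
    linarith [exp_one_lt_three]
  rw [Nat.add_sub_cancel, Nat.factorial_succ, Nat.cast_mul, mul_comm ((m + 1 : ℕ) : ℝ), mul_assoc]
  exact lt_mul_of_one_lt_right (by positivity) key

theorem stmt_18 (n : ℕ) (hn : 2 ≤ n) (a : ℝ) (ha : 0 < a) (ha1 : a ≤ 1)
    (lam : ℝ) (hlam : (n.factorial : ℝ) ≤ lam) (b : ℝ) (hb : 0 < b) :
    (∫ z in Set.Ioi a,
        z * (z + b) ^ (n - 1) *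
          (Real.exp (-1 / z) * z ^ (-(n + 2 : ℤ)) - lam * Real.exp (-z))) < 0 := by
  have hn1 : 1 ≤ n := by omega
  have hsplit (z : ℝ) : z * (z + b) ^ (n - 1) * (exp (-1 / z) * z ^ (-(n + 2 : ℤ)) - lam * exp (-z))
      = z * (z + b) ^ (n - 1) * (exp (-1 / z) * z ^ (-(n + 2 : ℤ))) -
        lam * (z * (z + b) ^ (n - 1) * exp (-z)) := by ring
  simp_rw [hsplit]
  rw [integral_sub (integrableOn_mul_add_pow_mul_exp_neg_inv_zpow_Ioi hn1 ha.le b)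
    ((integrableOn_mul_add_pow_mul_exp_neg_Ioi ha.le b _).const_mul lam), integral_const_mul]
  have hlam' : (n ! : ℝ) * (2 * exp (-1)) ≤ lam * (2 * exp (-1)) := by gcongr
  calc _ ≤ (n - 1)! * (1 + b) ^ (n - 1) - lam * ((1 + b) ^ (n - 1) * (2 * exp (-1))) :=
        sub_le_sub (integral_Ioi_mul_add_pow_mul_exp_neg_inv_zpow_le hn1 ha.le hb.le)
          (mul_le_mul_of_nonneg_left (le_integral_Ioi_mul_add_pow_mul_exp_neg ha.le ha1 hb.le _)
            ((Nat.cast_nonneg _).trans hlam))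
    _ = ((n - 1)! - lam * (2 * exp (-1))) * (1 + b) ^ (n - 1) := by ring
    _ < 0 := mul_neg_of_neg_of_pos
        (by linarith [factorial_pred_lt_factorial_mul_two_mul_exp_neg_one hn]) (by positivity)
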